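/- For integers $j \geq 3$ and $2 \leq l \leq \lfloor(j+1)/2\rfloor - 1$, the function $\mathbf{g}_1(j,l) = \sum_{k=1}^{j-1}\mathbf{f}(2k\pi/j)\left(1 - \cos\frac{2(l-1)k\pi}{j}\right)$ satisfies $\mathbf{g}_1(j,l+1) > \mathbf{g}_1(j,l)$, where $\mathbf{f}(\varphi) = \frac{3+\cos\varphi}{16\sin^3(\varphi/2)} + \cos\varphi$. -/

import Mathlib

open Real Finset

noncomputable def fbold (φ : ℝ) : ℝ :=
  (3 + Real.cos φ) / (16 * Real.sin (φ / 2) ^ 3) + Real.cos φ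

noncomputable def g1 (j l : ℕ) : ℝ :=
  ∑ k ∈ Finset.Icc 1 (j - 1),
    fbold (2 * k * π / j) * (1 - Real.cos (2 * (l - 1 : ℝ) * k * π / j))

/-!
Write `a = 2l - 1` and `x_k = kπ/j`. Since `cos ((a-1) x) - cos ((a+1) x) = 2 sin x sin (a x)`
and `fbold (2x) = (1/4 + cot² x / 2) / (2 sin x) + cos 2x`, the increment `g1 j (l+1) - g1 j l`
is `∑ₖ (1/4 + cot² x_k / 2) sin (a x_k) + ∑ₖ cos (2 x_k) (cos ((a-1) x_k) - cos ((a+1) x_k))`.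
The second sum is a combination of the sums `∑ₖ cos (2 m x_k)`, which equal `-1` for
`0 < m < j` (and `j - 1` for `m = 0`), so it is nonnegative.
In the first sum, `∑ₖ sin (a x_k) = cot (aπ/2j) > 0` because `a` is odd, and
`∑ₖ cot² x_k sin (a x_k) ≥ 0`: the summand is invariant under `k ↦ j - k`, so the sum is twice
the sum over `k ≤ j/2` (for even `j` the middle term vanishes, as `cot (π/2) = 0`). On that
range `cot² x_k` is convex and decreasing, and the iterated partial sums
`∑_{i ≤ n} ∑_{k ≤ i} sin (k t) = ((n+1) sin t - sin ((n+1) t)) / (4 sin² (t/2))`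
are nonnegative for `0 < t < π`, so summing by parts twice bounds the half sum below by
`cot² x_{j/2} · ∑_{k ≤ j/2} sin (a x_k) ≥ 0`.
-/

theorem sum_Icc_mul_eq_by_parts (w f : ℕ → ℝ) (N : ℕ) :
    ∑ k ∈ Icc 1 N, w k * f k =
      ∑ k ∈ Icc 1 (N - 1), (w k - w (k + 1)) * ∑ i ∈ Icc 1 k, f i
        + w N * ∑ i ∈ Icc 1 N, f i := by
  induction N with
  | zero => simp
  | succ N ih =>
    rw [sum_Icc_succ_top (by omega), ih, sum_Icc_succ_top (by omega : 1 ≤ N + 1) f]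
    rcases N with _ | N
    · simp
    · simp only [Nat.add_sub_cancel]
      rw [sum_Icc_succ_top (by omega : 1 ≤ N + 1) (fun k => (w k - w (k + 1)) * _)]
      ring

theorem sum_mul_nonneg_of_antitone (u f : ℕ → ℝ) (M : ℕ)
    (hu : ∀ k ∈ Icc 1 (M - 1), u (k + 1) ≤ u k) (hu0 : ∀ k ∈ Icc 1 M, 0 ≤ u k)
    (hf : ∀ k ∈ Icc 1 M, 0 ≤ ∑ i ∈ Icc 1 k, f i) :
    0 ≤ ∑ k ∈ Icc 1 M, u k * f k := by
  rw [sum_Icc_mul_eq_by_parts]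
  refine add_nonneg (sum_nonneg fun k hk => mul_nonneg (sub_nonneg.2 (hu k hk)) (hf k ?_)) ?_
  · simp only [mem_Icc] at hk ⊢; omega
  · rcases Nat.eq_zero_or_pos M with rfl | hM
    · simp
    · exact mul_nonneg (hu0 M (by simp only [mem_Icc]; omega)) (hf M (by simp only [mem_Icc]; omega))

theorem mul_sum_le_sum_mul_of_convex (w f : ℕ → ℝ) (N : ℕ)
    (hconv : ∀ k ∈ Icc 1 (N - 2), w (k + 1) - w (k + 2) ≤ w k - w (k + 1))
    (hmono : ∀ k ∈ Icc 1 (N - 1), w (k + 1) ≤ w k)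
    (hf : ∀ k ∈ Icc 1 (N - 1), 0 ≤ ∑ i ∈ Icc 1 k, ∑ r ∈ Icc 1 i, f r) :
    w N * ∑ i ∈ Icc 1 N, f i ≤ ∑ k ∈ Icc 1 N, w k * f k := by
  rw [sum_Icc_mul_eq_by_parts w f, le_add_iff_nonneg_left]
  exact sum_mul_nonneg_of_antitone _ _ _ hconv (fun k hk => sub_nonneg.2 (hmono k hk)) hf

theorem sum_Icc_eq_add_of_symm (g : ℕ → ℝ) (j : ℕ)
    (hg : ∀ k ∈ Icc 1 (j - 1), g (j - k) = g k) :
    ∑ k ∈ Icc 1 (j - 1), g k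
      = ∑ k ∈ Icc 1 (j / 2), g k + ∑ k ∈ Icc 1 ((j - 1) / 2), g k := by
  have hIoc : ∀ n, Icc 1 n = Ioc 0 n := fun n => by rw [← Icc_add_one_left_eq_Ioc, zero_add]
  rw [hIoc, hIoc, hIoc,
    ← sum_Ioc_consecutive _ (Nat.zero_le (j / 2)) (by omega : j / 2 ≤ j - 1)]
  congr 1
  refine sum_nbij' (fun k => j - k) (fun k => j - k) ?_ ?_ ?_ ?_ ?_ <;>
    intro k hk <;> simp only [mem_Ioc] at hk ⊢
  · omega
  · omega
  · omega
  · omega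
  · exact (hg k (by simp only [mem_Icc]; omega)).symm

theorem two_sin_half_mul_sum_sin (t : ℝ) (n : ℕ) :
    2 * sin (t / 2) * ∑ k ∈ Icc 1 n, sin (k * t)
      = cos (t / 2) - cos ((2 * n + 1) * (t / 2)) := by
  induction n with
  | zero => simp
  | succ n ih =>
    rw [sum_Icc_succ_top (by omega), mul_add, ih, two_mul_sin_mul_sin,
      show t / 2 - (n + 1 : ℕ) * t = -((2 * n + 1) * (t / 2)) by push_cast; ring, cos_neg]
    push_cast
    ring_nf

theorem two_sin_half_mul_sum_cos (t : ℝ) (n : ℕ) :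
    2 * sin (t / 2) * ∑ k ∈ Icc 1 n, cos (k * t)
      = sin ((2 * n + 1) * (t / 2)) - sin (t / 2) := by
  induction n with
  | zero => simp
  | succ n ih =>
    rw [sum_Icc_succ_top (by omega), mul_add, ih, two_mul_sin_mul_cos,
      show t / 2 - (n + 1 : ℕ) * t = -((2 * n + 1) * (t / 2)) by push_cast; ring, sin_neg]
    push_cast
    ring_nf

theorem four_sin_half_sq_mul_sum_sum_sin (t : ℝ) (n : ℕ) :
    4 * sin (t / 2) ^ 2 * ∑ i ∈ Icc 1 n, ∑ k ∈ Icc 1 i, sin (k * t)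
      = (n + 1) * sin t - sin ((n + 1) * t) := by
  induction n with
  | zero => simp
  | succ n ih =>
    rw [sum_Icc_succ_top (by omega), mul_add, ih,
      show 4 * sin (t / 2) ^ 2 = 2 * sin (t / 2) * (2 * sin (t / 2)) by ring, mul_assoc,
      two_sin_half_mul_sum_sin, mul_sub, two_mul_sin_mul_cos, two_mul_sin_mul_cos,
      show t / 2 - (2 * (n + 1 : ℕ) + 1) * (t / 2) = -((n + 1) * t) by push_cast; ring, sin_neg,
      sub_self, sin_zero, add_halves]
    push_cast
    ring_nf

theorem abs_sin_nat_mul_le (t : ℝ) (n : ℕ) : |sin (n * t)| ≤ n * |sin t| := by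
  induction n with
  | zero => simp
  | succ n ih =>
    push_cast
    rw [add_mul, one_mul, sin_add]
    calc |sin (n * t) * cos t + cos (n * t) * sin t|
        ≤ |sin (n * t)| * |cos t| + |cos (n * t)| * |sin t| := by
          rw [← abs_mul, ← abs_mul]; exact abs_add_le _ _
      _ ≤ |sin (n * t)| * 1 + 1 * |sin t| := by
          gcongr
          · exact abs_cos_le_one t
          · exact abs_cos_le_one _
      _ ≤ (n + 1) * |sin t| := by linarith

theorem sum_sum_sin_nonneg {t : ℝ} (ht₀ : 0 < t) (htπ : t < π) (n : ℕ) :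
    0 ≤ ∑ i ∈ Icc 1 n, ∑ k ∈ Icc 1 i, sin (k * t) := by
  have hbound : sin ((n + 1) * t) ≤ (n + 1) * sin t := by
    have := abs_sin_nat_mul_le t (n + 1)
    push_cast at this
    rw [abs_of_pos (sin_pos_of_pos_of_lt_pi ht₀ htπ)] at this
    exact (le_abs_self _).trans this
  have hhalf : 0 < sin (t / 2) := sin_pos_of_pos_of_lt_pi (by linarith) (by linarith)
  have := four_sin_half_sq_mul_sum_sum_sin t n
  refine nonneg_of_mul_nonneg_right (a := 4 * sin (t / 2) ^ 2) ?_ (by positivity)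
  linarith

theorem cot_sq_eq (x : ℝ) (hx : sin x ≠ 0) : cot x ^ 2 = (sin x ^ 2)⁻¹ - 1 := by
  rw [cot_eq_cos_div_sin, div_pow, cos_sq']
  field_simp

theorem sin_mul_sin_le_sin_sq_midpoint (x z : ℝ) : sin x * sin z ≤ sin ((x + z) / 2) ^ 2 := by
  have h := two_mul_sin_mul_sin x z
  rw [sin_sq_eq_half_sub, show 2 * ((x + z) / 2) = x + z by ring]
  linarith [cos_le_one (x - z)]

theorem two_mul_cot_sq_midpoint_le {x z : ℝ} (hx : 0 < sin x) (hz : 0 < sin z) :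
    2 * cot ((x + z) / 2) ^ 2 ≤ cot x ^ 2 + cot z ^ 2 := by
  have hxz := mul_pos hx hz
  have hm := sin_mul_sin_le_sin_sq_midpoint x z
  have hm0 : sin ((x + z) / 2) ≠ 0 := by
    intro h; rw [h] at hm; norm_num at hm; linarith
  rw [cot_sq_eq _ hm0, cot_sq_eq _ hx.ne', cot_sq_eq _ hz.ne']
  have h1 : 2 * (sin ((x + z) / 2) ^ 2)⁻¹ ≤ 2 * (sin x * sin z)⁻¹ := by
    gcongr
  have h2 : 2 * (sin x * sin z)⁻¹ ≤ (sin x ^ 2)⁻¹ + (sin z ^ 2)⁻¹ := by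
    have : 0 ≤ ((sin x)⁻¹ - (sin z)⁻¹) ^ 2 := sq_nonneg _
    rw [mul_inv, ← inv_pow, ← inv_pow]
    nlinarith
  linarith

theorem cot_sq_le_cot_sq {x y : ℝ} (hx : 0 < x) (hxy : x ≤ y) (hy : y ≤ π / 2) :
    cot y ^ 2 ≤ cot x ^ 2 := by
  have hsx : 0 < sin x := sin_pos_of_pos_of_lt_pi hx (by linarith [pi_pos])
  have hsxy : sin x ≤ sin y := sin_le_sin_of_le_of_le_pi_div_two (by linarith [pi_pos]) hy hxy
  rw [cot_sq_eq _ hsx.ne', cot_sq_eq _ (hsx.trans_le hsxy).ne']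
  gcongr

theorem cot_pos {x : ℝ} (hx : 0 < x) (hx' : x < π / 2) : 0 < cot x := by
  rw [cot_eq_cos_div_sin]
  exact div_pos (cos_pos_of_mem_Ioo ⟨by linarith, hx'⟩)
    (sin_pos_of_pos_of_lt_pi hx (by linarith [pi_pos]))

theorem sin_nat_mul_pi_div_pos {k j : ℕ} (hk : 0 < k) (hkj : k < j) : 0 < sin (k * π / j) := by
  have hk' : (0 : ℝ) < k := by exact_mod_cast hk
  have hkj' : (k : ℝ) < j := by exact_mod_cast hkj
  apply sin_pos_of_pos_of_lt_pi (div_pos (by positivity) (by linarith))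
  rw [div_lt_iff₀ (by linarith)]
  nlinarith [pi_pos]

theorem nat_mul_pi_div_lt_pi {a j : ℕ} (haj : a < j) : a * π / j < π := by
  have haj' : (a : ℝ) < j := by exact_mod_cast haj
  rw [div_lt_iff₀ (by linarith [(Nat.cast_nonneg a : (0 : ℝ) ≤ a)])]
  nlinarith [pi_pos]

theorem sum_sin_nat_mul_odd_mul_pi_div {j a : ℕ} (ha : Odd a) (haj : a < j) :
    ∑ k ∈ Icc 1 (j - 1), sin (k * (a * π / j)) = cot (a * π / j / 2) := by
  have hj : (0 : ℝ) < j := by exact_mod_cast (show 0 < j by omega)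
  have hpos : 0 < sin (a * π / j / 2) := by
    have := sin_nat_mul_pi_div_pos (j := 2 * j) ha.pos (by omega)
    rwa [Nat.cast_mul, Nat.cast_two, ← div_div, div_right_comm] at this
  have harg : (2 * ((j : ℝ) - 1) + 1) * (a * π / j / 2) = a * π - a * π / j / 2 := by
    field_simp
    ring
  have h := two_sin_half_mul_sum_sin (a * π / j) (j - 1)
  rw [Nat.cast_sub (by omega), Nat.cast_one, harg, cos_nat_mul_pi_sub, ha.neg_one_pow] at h
  rw [cot_eq_cos_div_sin, eq_div_iff hpos.ne']
  linarith

theorem sum_cos_nat_mul_two_pi_div {j m : ℕ} (hm : 0 < m) (hmj : m < j) :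
    ∑ k ∈ Icc 1 (j - 1), cos (k * (2 * m * π / j)) = -1 := by
  have hj : (0 : ℝ) < j := by exact_mod_cast (show 0 < j by omega)
  have hpos : 0 < sin (2 * m * π / j / 2) := by
    rw [show 2 * (m : ℝ) * π / j / 2 = m * π / j by ring]
    exact sin_nat_mul_pi_div_pos hm hmj
  have harg :
      (2 * ((j : ℝ) - 1) + 1) * (2 * m * π / j / 2) = m * (2 * π) - 2 * m * π / j / 2 := by
    field_simp
    ring
  have h := two_sin_half_mul_sum_cos (2 * m * π / j) (j - 1)
  rw [Nat.cast_sub (by omega), Nat.cast_one, harg, sin_nat_mul_two_pi_sub] at h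
  exact mul_left_cancel₀ (mul_ne_zero two_ne_zero hpos.ne') (by linarith)

theorem neg_one_le_sum_cos_nat_mul_two_pi_div {j m : ℕ} (hmj : m < j) :
    -1 ≤ ∑ k ∈ Icc 1 (j - 1), cos (k * (2 * m * π / j)) := by
  rcases Nat.eq_zero_or_pos m with rfl | hm
  · simp only [CharP.cast_eq_zero, mul_zero, zero_mul, zero_div, cos_zero, sum_const,
      Nat.card_Icc, nsmul_eq_mul, mul_one]
    linarith [(Nat.cast_nonneg _ : (0 : ℝ) ≤ ((j - 1 + 1 - 1 : ℕ) : ℝ))]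
  · exact (sum_cos_nat_mul_two_pi_div hm hmj).ge

theorem cot_sq_nat_sub_mul_pi_div {j k : ℕ} (hkj : k ≤ j) :
    cot ((j - k : ℕ) * π / j) ^ 2 = cot (k * π / j) ^ 2 := by
  rcases Nat.eq_zero_or_pos j with rfl | hj
  · simp
  rw [Nat.cast_sub hkj, show ((j : ℝ) - k) * π / j = π - k * π / j by field_simp,
    cot_eq_cos_div_sin, cot_eq_cos_div_sin, sin_pi_sub, cos_pi_sub, neg_div, neg_sq]

theorem sin_nat_sub_mul_odd_mul_pi_div {j k a : ℕ} (ha : Odd a) (hkj : k ≤ j) :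
    sin ((j - k : ℕ) * (a * π / j)) = sin (k * (a * π / j)) := by
  rcases Nat.eq_zero_or_pos j with rfl | hj
  · simp
  rw [Nat.cast_sub hkj, show ((j : ℝ) - k) * (a * π / j) = a * π - k * (a * π / j) by
    field_simp, sin_nat_mul_pi_sub, ha.neg_one_pow]
  ring

theorem cot_sq_nat_mul_pi_div_convex {j k : ℕ} (hk : 0 < k) (hkj : k + 2 < j) :
    cot ((k + 1 : ℕ) * π / j) ^ 2 - cot ((k + 2 : ℕ) * π / j) ^ 2
      ≤ cot (k * π / j) ^ 2 - cot ((k + 1 : ℕ) * π / j) ^ 2 := by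
  have h := two_mul_cot_sq_midpoint_le (sin_nat_mul_pi_div_pos hk (by omega : k < j))
    (sin_nat_mul_pi_div_pos (by omega : 0 < k + 2) hkj)
  rw [show ((k : ℝ) * π / j + ((k + 2 : ℕ) : ℝ) * π / j) / 2
      = ((k + 1 : ℕ) : ℝ) * π / j by push_cast; ring] at h
  linarith

theorem cot_sq_nat_succ_mul_pi_div_le {j k : ℕ} (hk : 0 < k) (hkj : 2 * (k + 1) ≤ j) :
    cot ((k + 1 : ℕ) * π / j) ^ 2 ≤ cot (k * π / j) ^ 2 := by
  have hj : (0 : ℝ) < j := by exact_mod_cast (show 0 < j by omega)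
  have hkj' : (2 * (k + 1) : ℝ) ≤ j := by exact_mod_cast hkj
  refine cot_sq_le_cot_sq (div_pos (mul_pos (by exact_mod_cast hk) pi_pos) hj)
    (by gcongr; linarith) ?_
  rw [div_le_iff₀ hj]
  push_cast
  nlinarith [pi_pos]

theorem sum_cot_sq_mul_sin_nonneg {j a : ℕ} (ha : Odd a) (haj : a < j) :
    0 ≤ ∑ k ∈ Icc 1 (j - 1), cot (k * π / j) ^ 2 * sin (k * (a * π / j)) := by
  set φ := a * π / j
  have hφ₀ : 0 < φ :=
    div_pos (mul_pos (by exact_mod_cast ha.pos) pi_pos) (by exact_mod_cast (by omega : 0 < j))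
  have hφπ : φ < π := nat_mul_pi_div_lt_pi haj
  rw [sum_Icc_eq_add_of_symm _ j fun k hk => by
    rw [cot_sq_nat_sub_mul_pi_div (by simp only [mem_Icc] at hk; omega),
      sin_nat_sub_mul_odd_mul_pi_div ha (by simp only [mem_Icc] at hk; omega)]]
  set v : ℕ → ℝ := fun k => cot (k * π / j) ^ 2
  set f : ℕ → ℝ := fun k => sin (k * φ)
  have habel : v (j / 2) * ∑ k ∈ Icc 1 (j / 2), f k ≤ ∑ k ∈ Icc 1 (j / 2), v k * f k :=
    mul_sum_le_sum_mul_of_convex v f (j / 2)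
      (fun k hk => by
        simp only [mem_Icc] at hk
        exact cot_sq_nat_mul_pi_div_convex (by omega) (by omega))
      (fun k hk => by
        simp only [mem_Icc] at hk
        exact cot_sq_nat_succ_mul_pi_div_le (by omega) (by omega))
      (fun k _ => sum_sum_sin_nonneg hφ₀ hφπ k)
  obtain ⟨hlast, hhalves⟩ : 0 ≤ v (j / 2) * ∑ k ∈ Icc 1 (j / 2), f k ∧
      ∑ k ∈ Icc 1 ((j - 1) / 2), v k * f k = ∑ k ∈ Icc 1 (j / 2), v k * f k := by
    rcases Nat.even_or_odd' j with ⟨m, rfl | rfl⟩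
    · have hm : 1 ≤ m := by omega
      have hvm : v m = 0 := by
        change cot ((m : ℝ) * π / (2 * m : ℕ)) ^ 2 = 0
        rw [show (m : ℝ) * π / (2 * m : ℕ) = π / 2 by push_cast; field_simp,
          cot_eq_cos_div_sin, cos_pi_div_two]
        simp
      rw [show 2 * m / 2 = m by omega, show (2 * m - 1) / 2 = m - 1 by omega, hvm, zero_mul]
      refine ⟨le_rfl, ?_⟩
      rw [← Nat.sub_add_cancel hm, sum_Icc_succ_top (by omega), Nat.sub_add_cancel hm, hvm,
        zero_mul, add_zero]
    · have hsplit := sum_Icc_eq_add_of_symm f (2 * m + 1) fun k hk =>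
        sin_nat_sub_mul_odd_mul_pi_div ha (by simp only [mem_Icc] at hk; omega)
      rw [sum_sin_nat_mul_odd_mul_pi_div ha haj, show (2 * m + 1) / 2 = m by omega,
        show (2 * m + 1 - 1) / 2 = m by omega] at hsplit
      have hcot : 0 < cot (φ / 2) := cot_pos (by positivity) (by linarith)
      rw [show (2 * m + 1) / 2 = m by omega, show (2 * m + 1 - 1) / 2 = m by omega]
      exact ⟨mul_nonneg (sq_nonneg _) (by linarith), rfl⟩
  rw [hhalves]
  linarith

theorem sum_weight_mul_sin_pos {j a : ℕ} (ha : Odd a) (haj : a < j) :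
    0 < ∑ k ∈ Icc 1 (j - 1), (1 / 4 + cot (k * π / j) ^ 2 / 2) * sin (k * (a * π / j)) := by
  have hj : (0 : ℝ) < j := by exact_mod_cast (show 0 < j by omega)
  have hφπ : a * π / j < π := nat_mul_pi_div_lt_pi haj
  have hcot : 0 < cot (a * π / j / 2) :=
    cot_pos (div_pos (div_pos (mul_pos (by exact_mod_cast ha.pos) pi_pos) hj) two_pos)
      (by linarith)
  have hsplit : ∑ k ∈ Icc 1 (j - 1), (1 / 4 + cot (k * π / j) ^ 2 / 2) * sin (k * (a * π / j))
      = 1 / 4 * ∑ k ∈ Icc 1 (j - 1), sin (k * (a * π / j))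
        + 1 / 2 * ∑ k ∈ Icc 1 (j - 1), cot (k * π / j) ^ 2 * sin (k * (a * π / j)) := by
    rw [mul_sum, mul_sum, ← sum_add_distrib]
    exact sum_congr rfl fun k _ => by ring
  rw [hsplit, sum_sin_nat_mul_odd_mul_pi_div ha haj]
  linarith [sum_cot_sq_mul_sin_nonneg ha haj]

theorem sum_cos_mul_cos_sub_nonneg {j l : ℕ} (hl : 2 ≤ l) (hlj : l + 2 ≤ j) :
    0 ≤ ∑ k ∈ Icc 1 (j - 1),
      cos (2 * k * π / j) * (cos (2 * (l - 1 : ℝ) * k * π / j) - cos (2 * l * k * π / j)) := by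
  have hterm : ∀ k : ℕ,
      cos (2 * k * π / j) * (cos (2 * (l - 1 : ℝ) * k * π / j) - cos (2 * l * k * π / j))
        = (cos (k * (2 * l * π / j)) + cos (k * (2 * (l - 2 : ℕ) * π / j))
            - cos (k * (2 * (l + 1 : ℕ) * π / j))
            - cos (k * (2 * (l - 1 : ℕ) * π / j))) / 2 := by
    intro k
    rw [Nat.cast_sub hl, Nat.cast_sub (by omega : 1 ≤ l)]
    push_cast
    rw [show k * (2 * l * π / j) = 2 * k * π / j + 2 * (l - 1 : ℝ) * k * π / j by ring,
      show k * (2 * (l - 2 : ℝ) * π / j)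
        = 2 * (l - 1 : ℝ) * k * π / j - 2 * k * π / j by ring,
      show k * (2 * (l + 1 : ℝ) * π / j) = 2 * k * π / j + 2 * l * k * π / j by ring,
      show k * (2 * (l - 1 : ℝ) * π / j) = 2 * l * k * π / j - 2 * k * π / j by ring]
    simp only [cos_add, cos_sub]
    ring
  simp only [hterm, ← sum_div, sum_sub_distrib, sum_add_distrib]
  rw [sum_cos_nat_mul_two_pi_div (m := l) (by omega) (by omega),
    sum_cos_nat_mul_two_pi_div (m := l + 1) (by omega) (by omega),
    sum_cos_nat_mul_two_pi_div (m := l - 1) (by omega) (by omega)]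
  linarith [neg_one_le_sum_cos_nat_mul_two_pi_div (j := j) (m := l - 2) (by omega)]

theorem fbold_two_mul {x : ℝ} (hx : sin x ≠ 0) :
    fbold (2 * x) = (1 / 4 + cot x ^ 2 / 2) / (2 * sin x) + cos (2 * x) := by
  rw [fbold, mul_div_cancel_left₀ x two_ne_zero, cot_sq_eq x hx, cos_two_mul, cos_sq']
  field_simp
  ring

theorem fbold_two_mul_mul_cos_sub {x : ℝ} (hx : sin x ≠ 0) (b : ℝ) :
    fbold (2 * x) * (cos ((b - 1) * x) - cos ((b + 1) * x))
      = (1 / 4 + cot x ^ 2 / 2) * sin (b * x)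
        + cos (2 * x) * (cos ((b - 1) * x) - cos ((b + 1) * x)) := by
  have hdiff : cos ((b - 1) * x) - cos ((b + 1) * x) = 2 * sin (b * x) * sin x := by
    rw [cos_sub_cos, show ((b - 1) * x + (b + 1) * x) / 2 = b * x by ring,
      show ((b - 1) * x - (b + 1) * x) / 2 = -x by ring, sin_neg]
    ring
  rw [fbold_two_mul hx, add_mul, hdiff]
  field_simp

theorem g1_succ_sub_g1 (j l : ℕ) :
    g1 j (l + 1) - g1 j l = ∑ k ∈ Icc 1 (j - 1),
      ((1 / 4 + cot (k * π / j) ^ 2 / 2) * sin (k * ((2 * l - 1) * π / j))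
        + cos (2 * k * π / j)
          * (cos (2 * (l - 1 : ℝ) * k * π / j) - cos (2 * l * k * π / j))) := by
  rw [g1, g1, ← sum_sub_distrib]
  refine sum_congr rfl fun k hk => ?_
  simp only [mem_Icc] at hk
  have h := fbold_two_mul_mul_cos_sub (sin_nat_mul_pi_div_pos (k := k) (j := j) (by omega)
    (by omega)).ne' (2 * l - 1)
  push_cast
  convert h using 2 <;> ring_nf

theorem g1_strict_mono_general (j l : ℕ) (hl : 2 ≤ l)
    (hl' : l ≤ (j + 1) / 2 - 1) :
    g1 j l < g1 j (l + 1) := by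
  have hsin := sum_weight_mul_sin_pos (j := j) (a := 2 * l - 1) ⟨l - 1, by omega⟩ (by omega)
  rw [Nat.cast_sub (by omega), Nat.cast_mul, Nat.cast_two, Nat.cast_one] at hsin
  have hcos := sum_cos_mul_cos_sub_nonneg (j := j) hl (by omega)
  rw [← sub_pos, g1_succ_sub_g1, sum_add_distrib]
  linarith

theorem g1_strict_mono (j l : ℕ) (hj : 3 ≤ j) (hl : 2 ≤ l)
    (hl' : l ≤ (j + 1) / 2 - 1) :
    g1 j l < g1 j (l + 1) :=
  g1_strict_mono_general j l hl hl'
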